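/- Under the same setting, the sequence {∫_ℝ δ(y') p_i(y') ν(dy')}_{i=1}^∞ belongs to ℓ²(ℕ, ℝ^P), where δ(y') = Σ_{j=1}^∞ σ_j p_j(y') (convergence in L²(ν)). -/

import Mathlib

/-!
Pairing with `p i` is continuous on `L²(ν)` by Cauchy–Schwarz, so `∫ p i • δ` is the limit of
`∫ p i • S_N` for the partial sums `S_N = ∑_{j<N} p j • σ j`. The orthogonality relation turns
these into `∑_{j<N} (δᵢⱼ - a² q i 0 q j 0) • σ j`, which converge to `σ i - (a² q i 0) • s`
with `s = ∑ⱼ q j 0 • σ j` (summable because both factors are square summable). Both `σ` and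
`(q i 0 • s)ᵢ` lie in `ℓ²`.
-/

open MeasureTheory Filter Topology

section L2Pairing

variable {α E : Type*} [MeasurableSpace α] {μ : Measure α}
  [NormedAddCommGroup E] [NormedSpace ℝ E]

lemma integrable_smul_of_memLp_two {f : α → ℝ} {g : α → E} (hf : MemLp f 2 μ)
    (hg : MemLp g 2 μ) : Integrable (fun x => f x • g x) μ :=
  memLp_one_iff_integrable.mp (hg.smul hf (r := 1))

lemma norm_integral_smul_le_sqrt_mul_sqrt {f : α → ℝ} {g : α → E} (hf : MemLp f 2 μ)
    (hg : MemLp g 2 μ) :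
    ‖∫ x, f x • g x ∂μ‖ ≤ √(∫ x, f x ^ 2 ∂μ) * √(∫ x, ‖g x‖ ^ 2 ∂μ) := by
  have holder := integral_mul_norm_le_Lp_mul_Lq (f := f) (g := fun x => ‖g x‖)
    Real.HolderConjugate.two_two (by rwa [ENNReal.ofReal_ofNat])
    (by rw [ENNReal.ofReal_ofNat]; exact hg.norm)
  simp only [Real.norm_eq_abs, abs_norm, sq_abs, Real.rpow_two, ← Real.sqrt_eq_rpow] at holder
  calc ‖∫ x, f x • g x ∂μ‖ ≤ ∫ x, ‖f x • g x‖ ∂μ := norm_integral_le_integral_norm _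
    _ = ∫ x, |f x| * ‖g x‖ ∂μ := by simp only [norm_smul, Real.norm_eq_abs]
    _ ≤ _ := holder

lemma tendsto_integral_smul_of_tendsto_integral_norm_sub_sq {ι : Type*} {l : Filter ι}
    {f : α → ℝ} {G : ι → α → E} {g : α → E} (hf : MemLp f 2 μ) (hG : ∀ n, MemLp (G n) 2 μ)
    (hg : MemLp g 2 μ) (hlim : Tendsto (fun n => ∫ x, ‖G n x - g x‖ ^ 2 ∂μ) l (𝓝 0)) :
    Tendsto (fun n => ∫ x, f x • G n x ∂μ) l (𝓝 (∫ x, f x • g x ∂μ)) := by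
  rw [tendsto_iff_norm_sub_tendsto_zero]
  have bound : ∀ n, ‖∫ x, f x • G n x ∂μ - ∫ x, f x • g x ∂μ‖
      ≤ √(∫ x, f x ^ 2 ∂μ) * √(∫ x, ‖G n x - g x‖ ^ 2 ∂μ) := fun n => by
    rw [← integral_sub (integrable_smul_of_memLp_two hf (hG n))
      (integrable_smul_of_memLp_two hf hg)]
    simp only [← smul_sub]
    exact norm_integral_smul_le_sqrt_mul_sqrt hf ((hG n).sub hg)
  refine squeeze_zero (fun n => norm_nonneg _) bound ?_
  simpa using (Real.continuous_sqrt.tendsto 0 |>.comp hlim).const_mul √(∫ x, f x ^ 2 ∂μ)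

lemma integral_smul_finset_sum_smul [CompleteSpace E] {ι : Type*} {f : α → ℝ}
    {φ : ι → α → ℝ} (hf : MemLp f 2 μ) (hφ : ∀ j, MemLp (φ j) 2 μ) (v : ι → E)
    (s : Finset ι) :
    ∫ x, f x • ∑ j ∈ s, φ j x • v j ∂μ = ∑ j ∈ s, (∫ x, f x * φ j x ∂μ) • v j := by
  simp only [Finset.smul_sum, smul_smul]
  rw [integral_finsetSum s fun j _ => (show Integrable (fun x => (f x * φ j x) • v j) μ from
    (integrable_smul_of_memLp_two hf (hφ j)).smul_const (v j))]
  simp only [integral_smul_const]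

end L2Pairing

section SquareSummable

variable {ι E : Type*} [NormedAddCommGroup E]

lemma summable_smul_of_summable_sq [NormedSpace ℝ E] [CompleteSpace E] {b : ι → ℝ}
    {v : ι → E} (hb : Summable fun i => b i ^ 2)
    (hv : Summable fun i => ‖v i‖ ^ 2) :
    Summable fun i => b i • v i := by
  refine Summable.of_norm_bounded ((hb.add hv).div_const 2) fun i => ?_
  rw [norm_smul, Real.norm_eq_abs]
  nlinarith [sq_nonneg (|b i| - ‖v i‖), sq_abs (b i)]

lemma memℓp_two_of_summable_sq {v : ι → E} (hv : Summable fun i => ‖v i‖ ^ 2) :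
    Memℓp v 2 :=
  memℓp_gen (by simpa [Real.rpow_two] using hv)

lemma memℓp_two_smul_const [NormedSpace ℝ E] {b : ι → ℝ} (hb : Summable fun i => b i ^ 2)
    (v : E) :
    Memℓp (fun i => b i • v) 2 :=
  memℓp_two_of_summable_sq <| (hb.mul_right (‖v‖ ^ 2)).congr fun i => by
    rw [norm_smul, mul_pow, Real.norm_eq_abs, sq_abs]

lemma hasSum_kronecker_sub_smul [NormedSpace ℝ E] [DecidableEq ι] {b : ι → ℝ} {v : ι → E}
    {s : E} (hs : HasSum (fun j => b j • v j) s) (i : ι) (c : ℝ) :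
    HasSum (fun j => ((if i = j then 1 else 0) - c * b j) • v j) (v i - c • s) := by
  convert (hasSum_ite_eq i (v i)).sub (hs.const_smul c) using 1
  funext j
  rw [sub_smul, ite_smul, one_smul, zero_smul, mul_smul]
  by_cases h : i = j
  · subst h; simp
  · simp [h, Ne.symm h]

end SquareSummable

theorem stmt4_general (P : ℕ) (ν : Measure ℝ) (a : ℝ)
    (q : ℕ → ℝ → ℝ) (p : ℕ → ℝ → ℝ)
    (hpL2 : ∀ i, MemLp (p i) 2 ν)
    (horth : ∀ i j, ∫ x, p i x * p j x ∂ν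
      = (if i = j then 1 else 0) - a ^ 2 * q i 0 * q j 0)
    (σ : ℕ → EuclideanSpace ℝ (Fin P))
    (hσ : Summable (fun i => ‖σ i‖ ^ 2))
    (hq0 : Summable (fun i => (q i 0) ^ 2))
    (δ : ℝ → EuclideanSpace ℝ (Fin P))
    (hδL2 : MemLp δ 2 ν)
    (hδ : Filter.Tendsto
      (fun N => ∫ y, ‖(∑ j ∈ Finset.range N, p j y • σ j) - δ y‖ ^ 2 ∂ν)
      Filter.atTop (nhds 0)) :
    Memℓp (fun i => ∫ y, p i y • δ y ∂ν) 2 := by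
  obtain ⟨s, hs⟩ := summable_smul_of_summable_sq hq0 hσ
  have coefficient (i : ℕ) : ∫ y, p i y • δ y ∂ν = σ i - (a ^ 2 * q i 0) • s := by
    have partial_sums := (hasSum_kronecker_sub_smul hs i (a ^ 2 * q i 0)).tendsto_sum_nat
    simp only [← horth i, ← integral_smul_finset_sum_smul (hpL2 i) hpL2] at partial_sums
    refine tendsto_nhds_unique ?_ partial_sums
    exact tendsto_integral_smul_of_tendsto_integral_norm_sub_sq (hpL2 i)
      (fun N => memLp_finsetSum _ fun j _ => (memLp_top_const (σ j)).smul (hpL2 j) (r := 2))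
      hδL2 hδ
  have hcoeff : Summable fun i => (a ^ 2 * q i 0) ^ 2 :=
    (hq0.mul_left ((a ^ 2) ^ 2)).congr fun i => by ring
  simp only [coefficient]
  exact (memℓp_two_of_summable_sq hσ).sub (memℓp_two_smul_const hcoeff s)

/-- Under the same setting, the sequence `{∫ δ(y') p_i(y') ν(dy')}_i` belongs to
`ℓ²(ℕ, ℝ^P)`, where `δ(y') = Σ_j σ_j p_j(y')` (convergence in `L²(ν)`). -/
theorem stmt4 (P : ℕ) (ν : Measure ℝ) (a : ℝ)
    (q : ℕ → ℝ → ℝ) (p : ℕ → ℝ → ℝ)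
    (hp : ∀ i x, p i x = x * q i x)
    (hpL2 : ∀ i, MemLp (p i) 2 ν)
    (horth : ∀ i j, ∫ x, p i x * p j x ∂ν
      = (if i = j then 1 else 0) - a ^ 2 * q i 0 * q j 0)
    (σ : ℕ → EuclideanSpace ℝ (Fin P))
    (hσ : Summable (fun i => ‖σ i‖ ^ 2))
    (hq0 : Summable (fun i => (q i 0) ^ 2))
    (δ : ℝ → EuclideanSpace ℝ (Fin P))
    (hδL2 : MemLp δ 2 ν)
    (hδ : Filter.Tendsto
      (fun N => ∫ y, ‖(∑ j ∈ Finset.range N, p j y • σ j) - δ y‖ ^ 2 ∂ν)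
      Filter.atTop (nhds 0)) :
    Memℓp (fun i => ∫ y, p i y • δ y ∂ν) 2 :=
  stmt4_general P ν a q p hpL2 horth σ hσ hq0 δ hδL2 hδ
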